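/- arXiv:0812.3933 — 2 statements merged into one kernel-verified Lean document; each statement's English description precedes it below -/
import Mathlib

section
/- For every permutation π, the prefix reversal / prefix transposition / prefix transreversal distance satisfies ⌊b(π)/2⌋ ≤ d_RTT(π) ≤ b(π) − 1. -/
/-- A permutation on `n` elements: a list `[π₀, π₁, …, π_{n+1}]` of distinct
naturals that is a rearrangement of `0, 1, …, n+1` with `π₀ = 0` and
`π_{n+1} = n+1`. -/
def IsPerm (n : ℕ) (π : List ℕ) : Prop :=
  π.Perm (List.range (n + 2)) ∧ π.getD 0 0 = 0 ∧ π.getD (n + 1) 0 = n + 1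

/-- Breakpoint count `b(π)`: `1` plus the number of indices `i` with
`2 ≤ i ≤ n+1` and `|π_i − π_{i−1}| ≠ 1` (these are exactly the consecutive
pairs of the tail `π₁, …, π_{n+1}`). -/
def bp (π : List ℕ) : ℕ :=
  1 + ((π.drop 1).zip (π.drop 2)).countP
        (fun p => !(p.1 + 1 == p.2 || p.2 + 1 == p.1))

/-- Redefined breakpoint count `b′(π)`: the number of indices `i` with
`1 ≤ i ≤ n+1` and `|π_i − π_{i−1}| ≠ 1`. -/
def bp' (π : List ℕ) : ℕ :=
  (π.zip (π.drop 1)).countP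
    (fun p => !(p.1 + 1 == p.2 || p.2 + 1 == p.1))

/-- Prefix reversal `β(1,j)`: `[π₀, π_{j−1}, …, π₁, π_j, …, π_{n+1}]`. -/
def prefixReversal (π : List ℕ) (j : ℕ) : List ℕ :=
  π.take 1 ++ ((π.drop 1).take (j - 1)).reverse ++ π.drop j

/-- Prefix transposition `τ(1,j,k)`:
`[π₀, π_j, …, π_{k−1}, π₁, …, π_{j−1}, π_k, …, π_{n+1}]`. -/
def prefixTransposition (π : List ℕ) (j k : ℕ) : List ℕ :=
  π.take 1 ++ (π.drop j).take (k - j) ++ (π.drop 1).take (j - 1) ++ π.drop k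

/-- Prefix transreversal `βτ(1,j,k)`:
`[π₀, π_j, …, π_{k−1}, π_{j−1}, …, π₁, π_k, …, π_{n+1}]`. -/
def prefixTransreversal (π : List ℕ) (j k : ℕ) : List ℕ :=
  π.take 1 ++ (π.drop j).take (k - j) ++ ((π.drop 1).take (j - 1)).reverse ++ π.drop k

/-- A prefix operation: a prefix reversal, a prefix transposition, or a
prefix transreversal. -/
inductive PrefOp
  | rev (j : ℕ)
  | trans (j k : ℕ)
  | transrev (j k : ℕ)

/-- Apply a prefix operation to a permutation. -/
def PrefOp.apply (π : List ℕ) : PrefOp → List ℕ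
  | .rev j => prefixReversal π j
  | .trans j k => prefixTransposition π j k
  | .transrev j k => prefixTransreversal π j k

/-- Validity of a prefix operation on a permutation of `n` elements:
`3 ≤ j ≤ n+1` for a prefix reversal, `2 ≤ j < k ≤ n+1` for a prefix
transposition or a prefix transreversal. -/
def PrefOp.Valid (n : ℕ) : PrefOp → Prop
  | .rev j => 3 ≤ j ∧ j ≤ n + 1
  | .trans j k => 2 ≤ j ∧ j < k ∧ k ≤ n + 1
  | .transrev j k => 2 ≤ j ∧ j < k ∧ k ≤ n + 1

/-- Is the operation a prefix reversal? -/
def PrefOp.isRev : PrefOp → Bool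
  | .rev _ => true
  | _ => false

/-- Is the operation a prefix transreversal? -/
def PrefOp.isTransrev : PrefOp → Bool
  | .transrev _ _ => true
  | _ => false

/-- Apply a sequence of prefix operations, left to right. -/
def applySeq : List ℕ → List PrefOp → List ℕ
  | π, [] => π
  | π, o :: os => applySeq (o.apply π) os

/-- All operations in the sequence are valid for permutations of `n` elements. -/
def ValidSeq (n : ℕ) (ops : List PrefOp) : Prop :=
  ∀ o ∈ ops, o.Valid n

/-- `fm π` is `m(π) + 1`, where `m(π)` is the largest index `m` such that
`π_i = i` for all `0 ≤ i ≤ m`; i.e. the length of the longest already-sorted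
prefix of `π`. -/
def fm (π : List ℕ) : ℕ :=
  ((List.range π.length).takeWhile (fun i => π.getD i 0 == i)).length

/-- Forward-march prefix reversal: reverses the segment
`π_{m(π)+1}, …, π_{j−1}` in place. -/
def fmPrefixReversal (π : List ℕ) (j : ℕ) : List ℕ :=
  π.take (fm π) ++ ((π.drop (fm π)).take (j - fm π)).reverse ++ π.drop j

/-- Forward-march prefix transposition: cuts the segment
`π_{m(π)+1}, …, π_{j−1}` and pastes it between `π_{k−1}` and `π_k`. -/
def fmPrefixTransposition (π : List ℕ) (j k : ℕ) : List ℕ :=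
  π.take (fm π) ++ (π.drop j).take (k - j) ++
    (π.drop (fm π)).take (j - fm π) ++ π.drop k

/-- A forward-march operation: an FM prefix reversal or an FM prefix
transposition. -/
inductive FMOp
  | rev (j : ℕ)
  | trans (j k : ℕ)

/-- Apply a forward-march operation. -/
def FMOp.apply (π : List ℕ) : FMOp → List ℕ
  | .rev j => fmPrefixReversal π j
  | .trans j k => fmPrefixTransposition π j k

/-- Validity of a forward-march operation on a permutation `π` of `n`
elements: `m(π)+3 ≤ j ≤ n+1` for an FM prefix reversal, and
`m(π)+2 ≤ j ≤ n`, `j < k ≤ n+1` for an FM prefix transposition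
(recall `fm π = m(π) + 1`). -/
def FMOp.Valid (n : ℕ) (π : List ℕ) : FMOp → Prop
  | .rev j => fm π + 2 ≤ j ∧ j ≤ n + 1
  | .trans j k => fm π + 1 ≤ j ∧ j ≤ n ∧ j < k ∧ k ≤ n + 1

/-- Is the forward-march operation an FM prefix reversal? -/
def FMOp.isRev : FMOp → Bool
  | .rev _ => true
  | _ => false

/-- Apply a sequence of forward-march operations, left to right. -/
def applyFMSeq : List ℕ → List FMOp → List ℕ
  | π, [] => π
  | π, o :: os => applyFMSeq (o.apply π) os

/-- Validity of a sequence of forward-march operations, where each operation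
must be valid for the permutation obtained after applying the previous ones. -/
def FMValidSeq (n : ℕ) : List ℕ → List FMOp → Prop
  | _, [] => True
  | π, o :: os => o.Valid n π ∧ FMValidSeq n (o.apply π) os

/-!
Write `π = 0 :: T`, so that `b(π) - 1` is the number of breakpoints of `T`: the junction with
`π₀` is never counted. A prefix operation cuts `T` at two places and glues the pieces back in
another order, so it destroys at most two breakpoints; this gives the lower bound.

For the upper bound, one operation always removes a breakpoint. The first strip `A` of `T`
(its longest prefix without breakpoints) is a run of consecutive values, ascending or descending,
and does not contain the final `n + 1`; so the successor `v` of its largest entry lies to its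
right. A transposition, transreversal or reversal that glues this entry to `v` can be chosen so
that it destroys more breakpoints than it creates.
-/

def Adjacent (a b : ℕ) : Prop := a + 1 = b ∨ b + 1 = a

instance : DecidableRel Adjacent := fun _ _ => inferInstanceAs (Decidable (_ ∨ _))

theorem adjacent_comm {a b : ℕ} : Adjacent a b ↔ Adjacent b a := or_comm

def breakCount : List ℕ → ℕ
  | a :: b :: l => (if Adjacent a b then 0 else 1) + breakCount (b :: l)
  | _ => 0

def seam (u v : List ℕ) : ℕ :=
  match u.getLast?, v.head? with
  | some a, some b => if Adjacent a b then 0 else 1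
  | _, _ => 0

theorem bp_cons (a : ℕ) (T : List ℕ) : bp (a :: T) = 1 + breakCount T := by
  suffices h : ∀ T : List ℕ, (T.zip (T.drop 1)).countP
      (fun p => !(p.1 + 1 == p.2 || p.2 + 1 == p.1)) = breakCount T by
    simpa [bp] using h T
  intro T
  induction T using breakCount.induct with
  | case1 a b l ih =>
    rw [show (a :: b :: l).zip ((a :: b :: l).drop 1) = (a, b) :: (b :: l).zip ((b :: l).drop 1)
      from rfl, List.countP_cons, ih, breakCount]
    split_ifs <;> simp_all [Adjacent, Nat.add_comm]
  | case2 l hl =>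
    rcases l with _ | ⟨a, _ | ⟨b, l⟩⟩
    · rfl
    · rfl
    · exact (hl a b l rfl).elim

theorem seam_le_one (u v : List ℕ) : seam u v ≤ 1 := by
  unfold seam
  split
  · split <;> simp
  · simp

theorem seam_eq_zero {u v : List ℕ} {a b : ℕ} (hu : u.getLast? = some a) (hv : v.head? = some b)
    (h : Adjacent a b) : seam u v = 0 := by
  simp [seam, hu, hv, h]

theorem seam_eq_one {u v : List ℕ} {a b : ℕ} (hu : u.getLast? = some a) (hv : v.head? = some b)
    (h : ¬Adjacent a b) : seam u v = 1 := by
  simp [seam, hu, hv, h]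

theorem seam_append_left {u v : List ℕ} (w : List ℕ) (hv : v ≠ []) :
    seam (u ++ v) w = seam v w := by
  simp [seam, List.getLast?_append, List.getLast?_eq_some_getLast hv]

theorem seam_append_right {v w : List ℕ} (u : List ℕ) (hv : v ≠ []) :
    seam u (v ++ w) = seam u v := by
  simp [seam, List.head?_append, List.head?_eq_some_head hv]

theorem seam_reverse (u v : List ℕ) : seam v.reverse u.reverse = seam u v := by
  unfold seam
  rw [List.getLast?_reverse, List.head?_reverse]
  rcases u.getLast? with _ | a <;> rcases v.head? with _ | b <;>
    first | rfl | exact if_congr adjacent_comm rfl rfl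

theorem breakCount_append (u v : List ℕ) :
    breakCount (u ++ v) = breakCount u + seam u v + breakCount v := by
  induction u using breakCount.induct with
  | case1 a b l ih =>
    rw [List.cons_append, List.cons_append, breakCount, ← List.cons_append, ih, breakCount,
      show a :: b :: l = [a] ++ b :: l from rfl, seam_append_left v (List.cons_ne_nil _ _)]
    omega
  | case2 l hl =>
    rcases l with _ | ⟨a, _ | ⟨b, l⟩⟩
    · simp [breakCount, seam]
    · rcases v with _ | ⟨b, v⟩ <;> simp [breakCount, seam]
    · exact (hl a b l rfl).elim

theorem breakCount_reverse (l : List ℕ) : breakCount l.reverse = breakCount l := by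
  induction l with
  | nil => rfl
  | cons a l ih =>
    have h := breakCount_append [a] l
    rw [List.singleton_append, ← seam_reverse, List.reverse_singleton] at h
    rw [List.reverse_cons, breakCount_append, ih, h]
    omega

theorem breakCount_range' (s m : ℕ) : breakCount (List.range' s m) = 0 := by
  induction m generalizing s with
  | zero => rfl
  | succ m ih =>
    rcases m with _ | m
    · rfl
    · rw [List.range'_succ, List.range'_succ, breakCount, ← List.range'_succ, ih]
      simp [Adjacent]

theorem bp_range (m : ℕ) : bp (List.range m) = 1 := by
  rcases m with _ | m
  · rfl
  · rw [List.range_eq_range', List.range'_succ, bp_cons, breakCount_range']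

theorem breakCount_le_swap_add_two (A B C A' : List ℕ) (hA : breakCount A' = breakCount A) :
    breakCount (A ++ B ++ C) ≤ breakCount (B ++ A' ++ C) + 2 := by
  simp only [breakCount_append]
  have := seam_le_one A B
  have := seam_le_one (A ++ B) C
  omega

theorem take_append_take_drop_append_drop {α : Type*} (T : List α) {i k : ℕ} (h : i ≤ k) :
    T.take i ++ (T.drop i).take (k - i) ++ T.drop k = T := by
  obtain ⟨m, rfl⟩ := Nat.exists_eq_add_of_le h
  rw [Nat.add_sub_cancel_left, ← List.take_add, List.take_append_drop]

theorem prefixReversal_cons (a : ℕ) (T : List ℕ) {j : ℕ} (hj : 1 ≤ j) :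
    prefixReversal (a :: T) j = a :: ((T.take (j - 1)).reverse ++ T.drop (j - 1)) := by
  obtain ⟨i, rfl⟩ := Nat.exists_eq_add_of_le' hj
  simp [prefixReversal]

theorem prefixTransposition_cons (a : ℕ) (T : List ℕ) {j k : ℕ} (hj : 1 ≤ j) (hjk : j ≤ k) :
    prefixTransposition (a :: T) j k =
      a :: ((T.drop (j - 1)).take (k - j) ++ T.take (j - 1) ++ T.drop (k - 1)) := by
  obtain ⟨i, rfl⟩ := Nat.exists_eq_add_of_le' hj
  obtain ⟨m, rfl⟩ := Nat.exists_eq_add_of_le hjk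
  rw [Nat.add_right_comm]
  simp [prefixTransposition]

theorem prefixTransreversal_cons (a : ℕ) (T : List ℕ) {j k : ℕ} (hj : 1 ≤ j) (hjk : j ≤ k) :
    prefixTransreversal (a :: T) j k =
      a :: ((T.drop (j - 1)).take (k - j) ++ (T.take (j - 1)).reverse ++ T.drop (k - 1)) := by
  obtain ⟨i, rfl⟩ := Nat.exists_eq_add_of_le' hj
  obtain ⟨m, rfl⟩ := Nat.exists_eq_add_of_le hjk
  rw [Nat.add_right_comm]
  simp [prefixTransreversal]

theorem bp_le_bp_apply_add_two {n : ℕ} {o : PrefOp} (ho : o.Valid n) (π : List ℕ) :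
    bp π ≤ bp (o.apply π) + 2 := by
  rcases π with _ | ⟨a, T⟩
  · cases o <;> simp [PrefOp.apply, prefixReversal, prefixTransposition, prefixTransreversal]
  have hsplit (j k : ℕ) (hj : 1 ≤ j) (hjk : j ≤ k) :
      T.take (j - 1) ++ (T.drop (j - 1)).take (k - j) ++ T.drop (k - 1) = T := by
    have h := take_append_take_drop_append_drop T (Nat.sub_le_sub_right hjk 1)
    rwa [show k - 1 - (j - 1) = k - j by omega] at h
  rcases o with j | ⟨j, k⟩ | ⟨j, k⟩ <;> simp only [PrefOp.Valid] at ho <;>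
    simp only [PrefOp.apply]
  · have := breakCount_le_swap_add_two (T.take (j - 1)) [] (T.drop (j - 1)) _ (breakCount_reverse _)
    rw [prefixReversal_cons a T (by omega), bp_cons, bp_cons]
    rw [List.nil_append, List.append_nil, List.take_append_drop] at this
    omega
  · have := breakCount_le_swap_add_two (T.take (j - 1)) ((T.drop (j - 1)).take (k - j))
      (T.drop (k - 1)) _ rfl
    rw [prefixTransposition_cons a T (by omega) (by omega), bp_cons, bp_cons]
    rw [hsplit j k (by omega) (by omega)] at this
    omega
  · have := breakCount_le_swap_add_two (T.take (j - 1)) ((T.drop (j - 1)).take (k - j))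
      (T.drop (k - 1)) _ (breakCount_reverse _)
    rw [prefixTransreversal_cons a T (by omega) (by omega), bp_cons, bp_cons]
    rw [hsplit j k (by omega) (by omega)] at this
    omega

theorem bp_le_bp_applySeq {n : ℕ} :
    ∀ {ops : List PrefOp}, ValidSeq n ops → ∀ π, bp π ≤ bp (applySeq π ops) + 2 * ops.length
  | [], _, π => by simp [applySeq]
  | o :: ops, h, π => by
    have h₁ := bp_le_bp_apply_add_two (h o List.mem_cons_self) π
    have h₂ := bp_le_bp_applySeq (fun o' ho' => h o' (List.mem_cons_of_mem o ho')) (o.apply π)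
    simp only [applySeq, List.length_cons]
    omega

theorem range_succ_eq_zero_cons (n : ℕ) : List.range (n + 1) = 0 :: List.range' 1 n := by
  rw [List.range_eq_range', List.range'_succ]

theorem isPerm_zero_cons_iff {n : ℕ} {T : List ℕ} :
    IsPerm n (0 :: T) ↔ T.Perm (List.range' 1 (n + 1)) ∧ T.getLast? = some (n + 1) := by
  unfold IsPerm
  rw [range_succ_eq_zero_cons, List.perm_cons]
  refine and_congr_right fun hT => ?_
  simp [List.getD_eq_getElem?_getD, List.getLast?_eq_getElem?, hT.length_eq]

theorem IsPerm.exists_eq_zero_cons {n : ℕ} {π : List ℕ} (hπ : IsPerm n π) : ∃ T, π = 0 :: T := by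
  obtain ⟨hperm, h0, -⟩ := hπ
  rcases π with _ | ⟨a, T⟩
  · simpa using hperm.length_eq
  · exact ⟨T, by simpa using h0⟩

theorem PrefOp.exists_apply_cons_eq {n : ℕ} {o : PrefOp} (ho : o.Valid n) (a : ℕ) (T : List ℕ) :
    ∃ m ≤ n, ∃ X : List ℕ, X.Perm (T.take m) ∧ o.apply (a :: T) = a :: (X ++ T.drop m) := by
  have htake (j k : ℕ) (hj : 1 ≤ j) (hjk : j ≤ k) :
      T.take (j - 1) ++ (T.drop (j - 1)).take (k - j) = T.take (k - 1) := by
    rw [← List.take_add, show j - 1 + (k - j) = k - 1 by omega]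
  rcases o with j | ⟨j, k⟩ | ⟨j, k⟩ <;> simp only [PrefOp.Valid] at ho
  · exact ⟨j - 1, by omega, _, List.reverse_perm _, prefixReversal_cons a T (by omega)⟩
  · refine ⟨k - 1, by omega, _, ?_, prefixTransposition_cons a T (by omega) (by omega)⟩
    rw [← htake j k (by omega) (by omega)]
    exact List.perm_append_comm
  · refine ⟨k - 1, by omega, _, ?_, prefixTransreversal_cons a T (by omega) (by omega)⟩
    rw [← htake j k (by omega) (by omega)]
    exact ((List.reverse_perm _).append_left _).trans List.perm_append_comm

theorem IsPerm.apply {n : ℕ} {π : List ℕ} (hπ : IsPerm n π) {o : PrefOp} (ho : o.Valid n) :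
    IsPerm n (o.apply π) := by
  obtain ⟨T, rfl⟩ := hπ.exists_eq_zero_cons
  obtain ⟨m, hm, X, hX, heq⟩ := PrefOp.exists_apply_cons_eq ho 0 T
  obtain ⟨hT, hlast⟩ := isPerm_zero_cons_iff.mp hπ
  have hlen : T.length = n + 1 := by simpa using hT.length_eq
  rw [heq, isPerm_zero_cons_iff]
  constructor
  · rw [← List.take_append_drop m T] at hT
    exact (hX.append_right _).trans hT
  · rw [List.getLast?_append, List.getLast?_drop, if_neg (by omega), hlast]
    rfl

theorem eq_range'_of_breakCount_eq_zero :
    ∀ {A : List ℕ} {x e : ℕ}, (x :: A).Nodup → breakCount (x :: A) = 0 →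
      (x :: A).getLast? = some e → x ≤ e → x :: A = List.range' x (e + 1 - x)
  | [], x, e, _, _, he, _ => by
    obtain rfl : x = e := by simpa using he
    simp
  | w :: A, x, e, hnd, h0, he, hxe => by
    rw [breakCount] at h0
    have hxw : Adjacent x w := by
      by_contra h
      simp [h] at h0
    rw [List.getLast?_cons_cons] at he
    rw [List.nodup_cons] at hnd
    have hwe : w ≤ e := by
      by_contra hwe
      obtain rfl : e = x := by unfold Adjacent at hxw; omega
      exact hnd.1 (List.mem_of_getLast? he)
    have ih := eq_range'_of_breakCount_eq_zero hnd.2 (by omega) he hwe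
    rcases hxw with rfl | rfl
    · rw [ih, show e + 1 - x = e + 1 - (x + 1) + 1 by omega, List.range'_succ]
    · exact absurd (ih ▸ List.mem_range'_1.mpr ⟨by omega, by omega⟩) hnd.1

theorem forall_mem_le_of_breakCount_eq_zero {A : List ℕ} (hnd : A.Nodup) (h0 : breakCount A = 0)
    {x e : ℕ} (hx : A.head? = some x) (he : A.getLast? = some e) (hxe : x ≤ e) :
    ∀ y ∈ A, y ≤ e := by
  obtain ⟨A, rfl⟩ := List.head?_eq_some_iff.mp hx
  intro y hy
  rw [eq_range'_of_breakCount_eq_zero hnd h0 he hxe, List.mem_range'_1] at hy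
  omega

theorem forall_mem_le_max_of_breakCount_eq_zero {A : List ℕ} (hnd : A.Nodup)
    (h0 : breakCount A = 0) {x e : ℕ} (hx : A.head? = some x) (he : A.getLast? = some e) :
    ∀ y ∈ A, y ≤ max x e := by
  rcases le_total x e with hxe | hex
  · simpa [hxe] using forall_mem_le_of_breakCount_eq_zero hnd h0 hx he hxe
  · intro y hy
    have := forall_mem_le_of_breakCount_eq_zero (List.nodup_reverse.mpr hnd)
      ((breakCount_reverse A).trans h0) (by rwa [List.head?_reverse])
      (by rwa [List.getLast?_reverse]) hex y (List.mem_reverse.mpr hy)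
    omega

theorem eq_range'_of_isPerm {n : ℕ} {T : List ℕ} (hT : IsPerm n (0 :: T))
    (h0 : breakCount T = 0) : T = List.range' 1 (n + 1) := by
  obtain ⟨hperm, hlast⟩ := isPerm_zero_cons_iff.mp hT
  have hmem (y : ℕ) : y ∈ T ↔ 1 ≤ y ∧ y < 1 + (n + 1) := by
    rw [hperm.mem_iff, List.mem_range'_1]
  rcases T with _ | ⟨x, A⟩
  · simp at hlast
  have hx := (hmem x).mp List.mem_cons_self
  have hrun := eq_range'_of_breakCount_eq_zero (hperm.nodup_iff.mpr List.nodup_range') h0 hlast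
    (by omega)
  have h1 := (hmem 1).mpr (by omega)
  rw [hrun, List.mem_range'_1] at h1
  rw [hrun, show x = 1 by omega, Nat.add_sub_cancel]

theorem exists_first_break :
    ∀ {T : List ℕ}, breakCount T ≠ 0 → ∃ A e b R, T = A ++ b :: R ∧ breakCount A = 0 ∧
      A.getLast? = some e ∧ ¬Adjacent e b
  | a :: b :: l, h => by
    by_cases hab : Adjacent a b
    · rw [breakCount, if_pos hab, zero_add] at h
      obtain ⟨A, e, c, R, hT, hA, he, hec⟩ := exists_first_break h
      rcases A with _ | ⟨b', A⟩
      · simp at he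
      obtain rfl : b = b' := (List.cons.inj hT).1
      refine ⟨a :: b :: A, e, c, R, by rw [hT]; rfl, ?_, ?_, hec⟩
      · rw [breakCount, if_pos hab, hA]
      · rwa [List.getLast?_cons_cons]
    · exact ⟨[a], a, b, l, rfl, rfl, rfl, hab⟩
  | [], h | [_], h => absurd rfl h

theorem breakCount_reverse_append (A C : List ℕ) :
    breakCount (A.reverse ++ C) + seam A C = breakCount (A ++ C) + seam A.reverse C := by
  simp only [breakCount_append, breakCount_reverse]
  omega

theorem breakCount_swap {A B : List ℕ} (C : List ℕ) (hA : A ≠ []) (hB : B ≠ []) :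
    breakCount (B ++ A ++ C) + seam A B + seam B C =
      breakCount (A ++ B ++ C) + seam B A + seam A C := by
  simp only [breakCount_append, seam_append_left C hA, seam_append_left C hB]
  omega

theorem breakCount_swap_reverse {A B : List ℕ} (C : List ℕ) (hA : A ≠ []) (hB : B ≠ []) :
    breakCount (B ++ A.reverse ++ C) + seam A B + seam B C =
      breakCount (A ++ B ++ C) + seam B A.reverse + seam A.reverse C := by
  simp only [breakCount_append, breakCount_reverse, seam_append_left C hB,
    seam_append_left C (List.reverse_ne_nil_iff.mpr hA)]
  omega

theorem prefixReversal_append (a : ℕ) (A R : List ℕ) :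
    prefixReversal (a :: (A ++ R)) (A.length + 1) = a :: (A.reverse ++ R) := by
  simp [prefixReversal_cons]

theorem prefixTransposition_append (a : ℕ) (A B R : List ℕ) :
    prefixTransposition (a :: (A ++ B ++ R)) (A.length + 1) (A.length + B.length + 1) =
      a :: (B ++ A ++ R) := by
  rw [prefixTransposition_cons _ _ (by omega) (by omega)]
  simp [List.drop_append]

theorem prefixTransreversal_append (a : ℕ) (A B R : List ℕ) :
    prefixTransreversal (a :: (A ++ B ++ R)) (A.length + 1) (A.length + B.length + 1) =
      a :: (B ++ A.reverse ++ R) := by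
  rw [prefixTransreversal_cons _ _ (by omega) (by omega)]
  simp [List.drop_append]

def BreakReducible (n : ℕ) (T : List ℕ) : Prop :=
  ∃ (o : PrefOp) (T' : List ℕ), o.Valid n ∧ o.apply (0 :: T) = 0 :: T' ∧
    breakCount T' < breakCount T

theorem IsPerm.length_eq {n : ℕ} {T : List ℕ} (hT : IsPerm n (0 :: T)) : T.length = n + 1 := by
  simpa using (isPerm_zero_cons_iff.mp hT).1.length_eq

theorem IsPerm.nodup {n : ℕ} {T : List ℕ} (hT : IsPerm n (0 :: T)) : T.Nodup :=
  (isPerm_zero_cons_iff.mp hT).1.nodup_iff.mpr List.nodup_range'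

theorem IsPerm.mem_iff {n : ℕ} {T : List ℕ} (hT : IsPerm n (0 :: T)) {y : ℕ} :
    y ∈ T ↔ 1 ≤ y ∧ y ≤ n + 1 := by
  rw [(isPerm_zero_cons_iff.mp hT).1.mem_iff, List.mem_range'_1]
  omega

/-- `y` and `z` are the only possible neighbours of `v`, so neither the last entry `n + 1` nor
anything after `v` can be adjacent to it. -/
theorem exists_cons_not_adjacent {n : ℕ} {D C : List ℕ} {v y z : ℕ}
    (hT : IsPerm n (0 :: (D ++ v :: C))) (hy : y ∈ D) (hz : z ∈ D) (hyz : y ≠ z)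
    (hyv : Adjacent y v) (hzv : Adjacent z v) : ∃ c C', C = c :: C' ∧ ¬Adjacent v c := by
  have hyn := (hT.mem_iff.mp (List.mem_append_left _ hy)).2
  have hzn := (hT.mem_iff.mp (List.mem_append_left _ hz)).2
  unfold Adjacent at hyv hzv
  rcases C with _ | ⟨c, C'⟩
  · have hlast := (isPerm_zero_cons_iff.mp hT).2
    simp only [List.getLast?_append, List.getLast?_singleton, Option.some_or,
      Option.some.injEq] at hlast
    omega
  · refine ⟨c, C', rfl, fun hvc => ?_⟩
    have hcD : c ∉ D := fun hc => List.disjoint_of_nodup_append hT.nodup hc (by simp)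
    have : c ≠ y := fun h => hcD (h ▸ hy)
    have : c ≠ z := fun h => hcD (h ▸ hz)
    unfold Adjacent at hvc
    omega

/-- Transpose `A` and `B` to glue `e` to `v`; if the last entry `l` of `B` is adjacent to `v`, this
would break the pair `l v`, so transreverse `A` past `B ++ [v]` instead. -/
theorem breakReducible_of_adjacent_last {n : ℕ} {A B C : List ℕ} {e b v : ℕ}
    (hT : IsPerm n (0 :: (A ++ B ++ v :: C))) (he : A.getLast? = some e)
    (hb : (B ++ v :: C).head? = some b) (heb : ¬Adjacent e b) (hev : Adjacent e v) :
    BreakReducible n (A ++ B ++ v :: C) := by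
  have hA : A ≠ [] := by rintro rfl; simp at he
  have hB : B ≠ [] := by
    rintro rfl
    obtain rfl : v = b := by simpa using hb
    exact heb hev
  have hlen := hT.length_eq
  have hAlen := List.length_pos_iff.mpr hA
  have hBlen := List.length_pos_iff.mpr hB
  simp only [List.length_append, List.length_cons] at hlen
  have hAB : seam A B = 1 :=
    seam_eq_one he (by rwa [List.head?_append_of_ne_nil _ hB] at hb) heb
  obtain ⟨l, hl⟩ : ∃ l, B.getLast? = some l := ⟨_, List.getLast?_eq_some_getLast hB⟩
  by_cases hlv : Adjacent l v
  · have hel : e ≠ l := fun h =>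
      List.disjoint_of_nodup_append (List.nodup_append.mp hT.nodup).1
        (List.mem_of_getLast? he) (h ▸ List.mem_of_getLast? hl)
    obtain ⟨c, C, rfl, hvc⟩ := exists_cons_not_adjacent hT
      (List.mem_append_left _ (List.mem_of_getLast? he))
      (List.mem_append_right _ (List.mem_of_getLast? hl)) hel hev hlv
    have hassoc : A ++ B ++ v :: c :: C = A ++ (B ++ [v]) ++ c :: C := by simp
    refine ⟨.transrev (A.length + 1) (A.length + (B ++ [v]).length + 1),
      B ++ [v] ++ A.reverse ++ c :: C, ?_, ?_, ?_⟩
    · simp only [PrefOp.Valid, List.length_append, List.length_cons, List.length_nil] at hlen ⊢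
      omega
    · rw [hassoc]
      exact prefixTransreversal_append 0 A (B ++ [v]) (c :: C)
    · have hswap := breakCount_swap_reverse (c :: C) hA (List.append_ne_nil_of_right_ne_nil B
        (List.cons_ne_nil v []))
      rw [← hassoc] at hswap
      have h₁ : seam A (B ++ [v]) = seam A B := seam_append_right A hB
      have h₂ : seam (B ++ [v]) (c :: C) = 1 := seam_eq_one (by simp) rfl hvc
      have h₃ : seam (B ++ [v]) A.reverse = 0 :=
        seam_eq_zero (by simp) (by rwa [List.head?_reverse]) (adjacent_comm.mp hev)
      have h₄ := seam_le_one A.reverse (c :: C)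
      omega
  · refine ⟨.trans (A.length + 1) (A.length + B.length + 1), B ++ A ++ v :: C, ?_,
      prefixTransposition_append 0 A B (v :: C), ?_⟩
    · simp only [PrefOp.Valid]
      omega
    · have hswap := breakCount_swap (v :: C) hA hB
      have h₂ : seam B (v :: C) = 1 := seam_eq_one hl rfl hlv
      have h₃ : seam A (v :: C) = 0 := seam_eq_zero he rfl hev
      have h₄ := seam_le_one B A
      omega

/-- Reverse `A ++ B` to glue `x` to `v`; if the last entry `l` of `B` is already adjacent to `v`,
transpose `A` past `B ++ [v]` instead. -/
theorem breakReducible_of_adjacent_head {n : ℕ} {A B C : List ℕ} {x e b v : ℕ}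
    (hT : IsPerm n (0 :: (A ++ B ++ v :: C))) (hx : A.head? = some x)
    (he : A.getLast? = some e) (hxe : x ≠ e) (hb : (B ++ v :: C).head? = some b)
    (heb : ¬Adjacent e b) (hxv : Adjacent x v) :
    BreakReducible n (A ++ B ++ v :: C) := by
  have hA : A ≠ [] := by rintro rfl; simp at hx
  have hA2 : 2 ≤ A.length := by
    rcases A with _ | ⟨y, _ | ⟨y', A⟩⟩
    · exact absurd rfl hA
    · simp only [List.head?_cons, List.getLast?_singleton, Option.some.injEq] at hx he
      exact absurd (hx.symm.trans he) hxe
    · simp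
  have hlen := hT.length_eq
  simp only [List.length_append, List.length_cons] at hlen
  obtain ⟨l, hl⟩ : ∃ l, (A ++ B).getLast? = some l :=
    ⟨_, List.getLast?_eq_some_getLast (List.append_ne_nil_of_left_ne_nil hA B)⟩
  by_cases hlv : Adjacent l v
  · have hB : B ≠ [] := by
      rintro rfl
      obtain rfl : v = b := by simpa using hb
      rw [List.append_nil, he, Option.some.injEq] at hl
      exact heb (hl ▸ hlv)
    have hl' : B.getLast? = some l := by rwa [List.getLast?_append_of_ne_nil _ hB] at hl
    have hxl : x ≠ l := fun h =>
      List.disjoint_of_nodup_append (List.nodup_append.mp hT.nodup).1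
        (List.mem_of_mem_head? hx) (h ▸ List.mem_of_getLast? hl')
    obtain ⟨c, C, rfl, hvc⟩ := exists_cons_not_adjacent hT
      (List.mem_append_left _ (List.mem_of_mem_head? hx)) (List.mem_of_getLast? hl) hxl hxv hlv
    have hassoc : A ++ B ++ v :: c :: C = A ++ (B ++ [v]) ++ c :: C := by simp
    refine ⟨.trans (A.length + 1) (A.length + (B ++ [v]).length + 1),
      B ++ [v] ++ A ++ c :: C, ?_, ?_, ?_⟩
    · simp only [PrefOp.Valid, List.length_append, List.length_cons, List.length_nil] at hlen ⊢
      omega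
    · rw [hassoc]
      exact prefixTransposition_append 0 A (B ++ [v]) (c :: C)
    · have hswap := breakCount_swap (c :: C) hA (List.append_ne_nil_of_right_ne_nil B
        (List.cons_ne_nil v []))
      rw [← hassoc] at hswap
      have h₁ : seam A (B ++ [v]) = 1 := by
        rw [seam_append_right A hB]
        exact seam_eq_one he (by rwa [List.head?_append_of_ne_nil _ hB] at hb) heb
      have h₂ : seam (B ++ [v]) (c :: C) = 1 := seam_eq_one (by simp) rfl hvc
      have h₃ : seam (B ++ [v]) A = 0 := seam_eq_zero (by simp) hx (adjacent_comm.mp hxv)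
      have h₄ := seam_le_one A (c :: C)
      omega
  · refine ⟨.rev ((A ++ B).length + 1), (A ++ B).reverse ++ v :: C, ?_,
      prefixReversal_append 0 (A ++ B) (v :: C), ?_⟩
    · simp only [PrefOp.Valid, List.length_append]
      omega
    · have hrev := breakCount_reverse_append (A ++ B) (v :: C)
      have h₁ : seam (A ++ B) (v :: C) = 1 := seam_eq_one hl rfl hlv
      have h₂ : seam (A ++ B).reverse (v :: C) = 0 := seam_eq_zero
        (by rw [List.getLast?_reverse, List.head?_append_of_ne_nil _ hA]; exact hx) rfl hxv
      omega

theorem breakReducible_of_breakCount_ne_zero {n : ℕ} {T : List ℕ} (hT : IsPerm n (0 :: T))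
    (h : breakCount T ≠ 0) : BreakReducible n T := by
  obtain ⟨A, e, b, R, rfl, hA0, he, heb⟩ := exists_first_break h
  have hA : A ≠ [] := by rintro rfl; simp at he
  obtain ⟨x, hx⟩ : ∃ x, A.head? = some x := ⟨_, List.head?_eq_some_head hA⟩
  have hdisj := List.disjoint_of_nodup_append hT.nodup
  have hmax := forall_mem_le_max_of_breakCount_eq_zero (List.nodup_append.mp hT.nodup).1 hA0 hx he
  have hlast : n + 1 ∈ b :: R := by
    have := (isPerm_zero_cons_iff.mp hT).2
    rw [List.getLast?_append_of_ne_nil _ (List.cons_ne_nil b R)] at this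
    exact List.mem_of_getLast? this
  have hmaxA : max x e ∈ A := by
    rcases max_choice x e with h | h <;> rw [h]
    exacts [List.mem_of_mem_head? hx, List.mem_of_getLast? he]
  have hmaxn : max x e ≠ n + 1 := fun h => hdisj hmaxA (h ▸ hlast)
  have hmaxT := hT.mem_iff.mp (List.mem_append_left _ hmaxA)
  have hv : max x e + 1 ∈ b :: R := by
    have hvT : max x e + 1 ∈ A ++ b :: R := hT.mem_iff.mpr ⟨by omega, by omega⟩
    rcases List.mem_append.mp hvT with hvA | hvR
    · exact absurd (hmax _ hvA) (by omega)
    · exact hvR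
  obtain ⟨B, C, hBC⟩ := List.append_of_mem hv
  have hb : (B ++ (max x e + 1) :: C).head? = some b := by rw [← hBC]; rfl
  rw [hBC, ← List.append_assoc] at hT ⊢
  rcases le_or_gt x e with hxe | hex
  · refine breakReducible_of_adjacent_last hT he hb heb (Or.inl ?_)
    omega
  · refine breakReducible_of_adjacent_head hT hx he hex.ne' hb heb (Or.inl ?_)
    omega

theorem exists_sort_of_isPerm {n : ℕ} (T : List ℕ) (hT : IsPerm n (0 :: T)) :
    ∃ ops, ValidSeq n ops ∧ applySeq (0 :: T) ops = List.range (n + 2) ∧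
      ops.length ≤ breakCount T := by
  induction hk : breakCount T using Nat.strong_induction_on generalizing T with
  | _ k ih =>
    by_cases h0 : k = 0
    · refine ⟨[], fun _ h => absurd h List.not_mem_nil, ?_, by simp⟩
      rw [applySeq, eq_range'_of_isPerm hT (hk.trans h0), ← range_succ_eq_zero_cons]
    · obtain ⟨o, T', ho, happly, hlt⟩ := breakReducible_of_breakCount_ne_zero hT (hk ▸ h0)
      have hT' : IsPerm n (0 :: T') := happly ▸ hT.apply ho
      obtain ⟨ops, hops, hsort, hlen⟩ := ih _ (hk ▸ hlt) T' hT' rfl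
      refine ⟨o :: ops, List.forall_mem_cons.mpr ⟨ho, hops⟩, ?_, ?_⟩
      · rwa [applySeq, happly]
      · simp only [List.length_cons]
        omega

/-- `⌊b(π)/2⌋ ≤ d_RTT(π) ≤ b(π) − 1`. -/
theorem sortRTT_bounds
    (n : ℕ) (π : List ℕ) (hπ : IsPerm n π) :
    (∀ ops : List PrefOp, ValidSeq n ops →
        applySeq π ops = List.range (n + 2) → bp π / 2 ≤ ops.length) ∧
    (∃ ops : List PrefOp, ValidSeq n ops ∧
        applySeq π ops = List.range (n + 2) ∧ ops.length ≤ bp π - 1) := by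
  obtain ⟨T, rfl⟩ := hπ.exists_eq_zero_cons
  constructor
  · intro ops hops hsort
    have := bp_le_bp_applySeq hops (0 :: T)
    rw [hsort, bp_range] at this
    omega
  · obtain ⟨ops, hops, hsort, hlen⟩ := exists_sort_of_isPerm T hπ
    exact ⟨ops, hops, hsort, by rw [bp_cons]; omega⟩
end

section
/- For every permutation π, every sequence of forward-march operations (each an FM prefix reversal or an FM prefix transposition) that transforms π into the identity permutation has length at least ⌈b′(π)/3⌉; i.e., d′(π) ≥ ⌈b′(π)/3⌉. -/
/-!
Each forward-march operation cuts `π` into at most four blocks and glues them back together,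
possibly reversing one of them. A breakpoint inside a block survives (reversal preserves
adjacency), so only the at most three cut points can disappear: `b′` drops by at most `3` per
operation, while the identity has `b′ = 0`.
-/

lemma bp'_nil : bp' [] = 0 := rfl

lemma bp'_singleton (a : ℕ) : bp' [a] = 0 := rfl

lemma bp'_pair_le_one (a b : ℕ) : bp' [a, b] ≤ 1 := by
  simp only [bp', List.drop_one, List.tail_cons, List.zip_cons_cons, List.zip_nil_right,
    List.countP_singleton]
  split <;> omega

lemma bp'_pair_comm (a b : ℕ) : bp' [a, b] = bp' [b, a] := by
  simp only [bp', List.drop_one, List.tail_cons, List.zip_cons_cons, List.zip_nil_right,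
    List.countP_singleton, Bool.or_comm]

lemma bp'_cons_cons (a b : ℕ) (L : List ℕ) :
    bp' (a :: b :: L) = bp' [a, b] + bp' (b :: L) := by
  simp only [bp', List.drop_one, List.tail_cons, List.zip_cons_cons, List.zip_nil_right,
    List.countP_cons, List.countP_nil]
  omega

lemma bp'_append_cons (X : List ℕ) (y : ℕ) (Y : List ℕ) :
    bp' (X ++ y :: Y) = bp' (X ++ [y]) + bp' (y :: Y) := by
  induction X with
  | nil => simp [bp'_singleton]
  | cons x X ih =>
    cases X with
    | nil => exact bp'_cons_cons x y Y
    | cons x' X' =>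
      simp only [List.cons_append] at ih ⊢
      rw [bp'_cons_cons x x' (X' ++ y :: Y), bp'_cons_cons x x' (X' ++ [y]), ih]
      omega

lemma bp'_append_singleton_le (X : List ℕ) (y : ℕ) : bp' (X ++ [y]) ≤ bp' X + 1 := by
  rcases List.eq_nil_or_concat' X with rfl | ⟨Z, x, rfl⟩
  · simp [bp'_singleton]
  · rw [List.append_assoc, List.singleton_append, bp'_append_cons Z x [y]]
    have := bp'_pair_le_one x y
    omega

lemma bp'_le_bp'_append_singleton (X : List ℕ) (y : ℕ) : bp' X ≤ bp' (X ++ [y]) := by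
  rcases List.eq_nil_or_concat' X with rfl | ⟨Z, x, rfl⟩
  · simp [bp'_nil]
  · rw [List.append_assoc, List.singleton_append, bp'_append_cons Z x [y]]
    omega

lemma bp'_append_le (X Y : List ℕ) : bp' (X ++ Y) ≤ bp' X + bp' Y + 1 := by
  cases Y with
  | nil => simp [bp'_nil]
  | cons y Y =>
    rw [bp'_append_cons]
    have := bp'_append_singleton_le X y
    omega

lemma bp'_add_bp'_le_bp'_append (X Y : List ℕ) : bp' X + bp' Y ≤ bp' (X ++ Y) := by
  cases Y with
  | nil => simp [bp'_nil]
  | cons y Y =>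
    rw [bp'_append_cons]
    have := bp'_le_bp'_append_singleton X y
    omega

@[simp]
lemma bp'_reverse (L : List ℕ) : bp' L.reverse = bp' L := by
  induction L with
  | nil => rfl
  | cons a L ih =>
    cases L with
    | nil => rfl
    | cons b L =>
      rw [List.reverse_cons, List.reverse_cons, List.append_assoc, List.singleton_append,
        bp'_append_cons, ← List.reverse_cons, ih, bp'_cons_cons a, bp'_pair_comm]
      omega

lemma bp'_range' (a m : ℕ) : bp' (List.range' a m) = 0 := by
  induction m generalizing a with
  | zero => rfl
  | succ m ih =>
    cases m with
    | zero => rfl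
    | succ m =>
      rw [List.range'_succ, List.range'_succ, bp'_cons_cons, ← List.range'_succ, ih]
      simp [bp']

lemma bp'_range (m : ℕ) : bp' (List.range m) = 0 := by
  rw [List.range_eq_range']
  exact bp'_range' 0 m

lemma bp'_flatten_le (Ls : List (List ℕ)) :
    bp' Ls.flatten ≤ (Ls.map bp').sum + (Ls.length - 1) := by
  induction Ls with
  | nil => simp [bp'_nil]
  | cons L Ls ih =>
    cases Ls with
    | nil => simp
    | cons M Ms =>
      rw [List.flatten_cons]
      have := bp'_append_le L (M :: Ms).flatten
      simp only [List.map_cons, List.sum_cons, List.length_cons] at ih ⊢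
      omega

lemma sum_map_bp'_le_bp'_flatten (Ls : List (List ℕ)) : (Ls.map bp').sum ≤ bp' Ls.flatten := by
  induction Ls with
  | nil => simp
  | cons L Ls ih =>
    rw [List.flatten_cons, List.map_cons, List.sum_cons]
    have := bp'_add_bp'_le_bp'_append L Ls.flatten
    omega

lemma bp'_flatten_le_of_sum_le {Ls Ms : List (List ℕ)}
    (h : (Ls.map bp').sum ≤ (Ms.map bp').sum) :
    bp' Ls.flatten ≤ bp' Ms.flatten + (Ls.length - 1) := by
  have := bp'_flatten_le Ls
  have := sum_map_bp'_le_bp'_flatten Ms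
  omega

lemma bp'_le_bp'_reverse_segment (L : List ℕ) {i j : ℕ} (hij : i ≤ j) :
    bp' L ≤ bp' (L.take i ++ ((L.drop i).take (j - i)).reverse ++ L.drop j) + 2 := by
  obtain ⟨d, rfl⟩ := Nat.exists_eq_add_of_le hij
  have hL : L = [L.take i, (L.drop i).take d, L.drop (i + d)].flatten := by simp
  have := bp'_flatten_le_of_sum_le
    (Ls := [L.take i, (L.drop i).take d, L.drop (i + d)])
    (Ms := [L.take i, ((L.drop i).take d).reverse, L.drop (i + d)]) (by simp)
  rw [← hL] at this
  simpa [List.append_assoc] using this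

lemma bp'_le_bp'_swap_segments (L : List ℕ) {i j k : ℕ} (hij : i ≤ j) (hjk : j ≤ k) :
    bp' L ≤ bp' (L.take i ++ (L.drop j).take (k - j) ++ (L.drop i).take (j - i) ++ L.drop k)
      + 3 := by
  obtain ⟨d, rfl⟩ := Nat.exists_eq_add_of_le hij
  obtain ⟨e, rfl⟩ := Nat.exists_eq_add_of_le hjk
  have hL : L = [L.take i, (L.drop i).take d, (L.drop (i + d)).take e,
      L.drop (i + d + e)].flatten := by simp
  have := bp'_flatten_le_of_sum_le
    (Ls := [L.take i, (L.drop i).take d, (L.drop (i + d)).take e, L.drop (i + d + e)])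
    (Ms := [L.take i, (L.drop (i + d)).take e, (L.drop i).take d, L.drop (i + d + e)])
    (by simp only [List.map_cons, List.map_nil, List.sum_cons, List.sum_nil]; omega)
  rw [← hL] at this
  simpa [List.append_assoc] using this

lemma bp'_le_bp'_apply_add_three {n : ℕ} {π : List ℕ} {o : FMOp} (hv : o.Valid n π) :
    bp' π ≤ bp' (o.apply π) + 3 := by
  cases o with
  | rev j =>
    obtain ⟨hmj, -⟩ := hv
    have := bp'_le_bp'_reverse_segment π (i := fm π) (j := j) (by omega)
    simp only [FMOp.apply, fmPrefixReversal]
    omega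
  | trans j k =>
    obtain ⟨hmj, -, hjk, -⟩ := hv
    have := bp'_le_bp'_swap_segments π (i := fm π) (by omega) hjk.le
    simp only [FMOp.apply, fmPrefixTransposition]
    omega

lemma bp'_le_three_mul_length_add {n : ℕ} {π : List ℕ} {ops : List FMOp}
    (hval : FMValidSeq n π ops) : bp' π ≤ 3 * ops.length + bp' (applyFMSeq π ops) := by
  induction ops generalizing π with
  | nil => simp [applyFMSeq]
  | cons o ops ih =>
    obtain ⟨hv, hval⟩ := hval
    have := bp'_le_bp'_apply_add_three hv
    have := ih hval
    simp only [applyFMSeq, List.length_cons]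
    omega

theorem sortFM_length_lower_bound_general
    (n : ℕ) (π : List ℕ)
    (ops : List FMOp) (hval : FMValidSeq n π ops)
    (hsort : applyFMSeq π ops = List.range (n + 2)) :
    (bp' π + 2) / 3 ≤ ops.length := by
  have := bp'_le_three_mul_length_add hval
  rw [hsort, bp'_range] at this
  omega

/-- every sequence of forward-march operations sorting `π` has
length at least `⌈b′(π)/3⌉`. -/
theorem sortFM_length_lower_bound
    (n : ℕ) (π : List ℕ) (hπ : IsPerm n π)
    (ops : List FMOp) (hval : FMValidSeq n π ops)
    (hsort : applyFMSeq π ops = List.range (n + 2)) :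
    (bp' π + 2) / 3 ≤ ops.length :=
  sortFM_length_lower_bound_general n π ops hval hsort
end
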